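/- Let T be a Hurwitz tree of type (G,p) with set of leaves B, let A ⊆ B, b ∈ A, and let χ be a character of G with ⟨χ, (u_{G_a})^*⟩ = m for a ∈ A and = 0 for a ∈ B∖A, where m = ⟨χ, u_G⟩. Then m · d(A, b) = δ_b(χ) - δ_{v_0}(χ), where d(A,b) is the density of A at b and δ_{v_0} is the depth at the root. -/

import Mathlib

open Finset

/-- A rooted metric tree: a finite set of vertices with a parent function, a root, a
unique trunk edge at the root, and a nonnegative rational thickness attached to each
edge (recorded at its target vertex), which vanishes exactly at the leaves. -/
structure MetricRootedTree where
  V : Type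
  [fin : Fintype V]
  [deq : DecidableEq V]
  root : V
  parent : V → V
  parent_root : parent root = root
  reaches_root : ∀ v, ∃ n : ℕ, parent^[n] v = root
  trunk : V
  trunk_ne : trunk ≠ root
  trunk_parent : parent trunk = root
  trunk_unique : ∀ w, w ≠ root → parent w = root → w = trunk
  eps : V → ℚ
  eps_nonneg : ∀ v, 0 ≤ eps v
  eps_zero_iff : ∀ v, v ≠ root → (eps v = 0 ↔ ∀ w, parent w = v → w = v)

attribute [instance] MetricRootedTree.fin MetricRootedTree.deq

namespace MetricRootedTree

variable (T : MetricRootedTree)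

/-- `v ≤ w` : there is an oriented path from `v` down to `w`. -/
def le (v w : T.V) : Prop := ∃ n : ℕ, T.parent^[n] w = v

/-- A leaf is a maximal vertex (no children) other than the root. -/
def IsLeaf (v : T.V) : Prop := v ≠ T.root ∧ ∀ w, T.parent w = v → w = v

open Classical in
/-- The set `B` of leaves. -/
noncomputable def leaves : Finset T.V := Finset.univ.filter T.IsLeaf

open Classical in
/-- Inverse distance between two leaves: the sum of the thicknesses of the edges on the
common initial segment of the paths from the root to `b₁` and to `b₂`. -/
noncomputable def idist (b₁ b₂ : T.V) : ℚ :=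
  ∑ v ∈ Finset.univ.filter (fun v => T.le v b₁ ∧ T.le v b₂ ∧ v ≠ T.root), T.eps v

/-- The density of a set of leaves `A` at `b ∈ A`: `d(A,b) = Σ_{b' ∈ A, b' ≠ b} d(b,b')`. -/
noncomputable def density (A : Finset T.V) (b : T.V) : ℚ :=
  ∑ b' ∈ A.erase b, T.idist b b'

open Classical in
/-- `n(A,v) = |{b' ∈ A : b' ≠ b, v ≤ b'}|`. -/
noncomputable def nCount (A : Finset T.V) (b v : T.V) : ℕ :=
  ((A.erase b).filter (fun b' => T.le v b')).card

end MetricRootedTree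

section Characters

open Classical

variable {G : Type} [Group G] [Fintype G]

/-- Inner product of class functions on a finite group. -/
noncomputable def innerCF (χ₁ χ₂ : G → ℂ) : ℂ :=
  (Fintype.card G : ℂ)⁻¹ * ∑ g : G, (starRingEnd ℂ) (χ₁ g) * χ₂ g

/-- Induction of a class function supported on a subgroup `H ≤ G` to `G`. -/
noncomputable def indCF (H : Subgroup G) (f : G → ℂ) : G → ℂ :=
  fun g => (Nat.card H : ℂ)⁻¹ * ∑ x : G, f (x⁻¹ * g * x)

open Classical in
/-- The augmentation character `u_H = r_H - 1_H` of `H`, extended by zero to `G`. -/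
noncomputable def augChar (H : Subgroup G) : G → ℂ :=
  fun h => if h ∈ H then (if h = 1 then (Nat.card H : ℂ) - 1 else -1) else 0

/-- The induced augmentation character `(u_H)^* = Ind_H^G (r_H - 1_H)`. -/
noncomputable def indAug (H : Subgroup G) : G → ℂ := indCF H (augChar H)

open Classical in
/-- The class function `δ_H^mult` of a cyclic `p`-subgroup `H ≤ G` of order `p^m`
(extended by zero to `G`): `δ(σ^a) = -p^(i+1)/(p-1)` for `σ^a ≠ 1` with `i = ord_p a`
(so that `σ^a` has order `p^(m-i)`), and `δ(1) = m·p^m`. -/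
noncomputable def deltaMultSub (p : ℕ) (H : Subgroup G) : G → ℂ :=
  fun h =>
    if h ∈ H then
      (if h = 1 then ((Nat.card H).factorization p : ℂ) * (Nat.card H : ℂ)
       else -((p : ℂ) ^ ((Nat.card H).factorization p - (orderOf h).factorization p + 1))
              / ((p : ℂ) - 1))
    else 0

end Characters

open Classical in
/-- The set of children (successors) of a vertex. -/
noncomputable def MetricRootedTree.children (T : MetricRootedTree) (v : T.V) : Finset T.V :=
  Finset.univ.filter (fun w => T.parent w = v ∧ w ≠ v)

/-- A Hurwitz tree of type `(G,p)`: a rooted metric tree with monodromy groups `G_v`,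
Artin characters `a_e` (attached to the target vertex of each edge) and depth characters
`δ_v`, subject to axioms (H1)–(H5) of Brewis–Wewers. -/
structure HurwitzTree (G : Type) [Group G] [Fintype G] (p : ℕ) extends MetricRootedTree where
  Gv : V → Subgroup G
  av : V → G → ℂ
  dv : V → G → ℂ
  -- (H1): monodromy groups decrease (up to conjugacy) along edges …
  h1_sub : ∀ v w, parent w = v → w ≠ v → ∃ g : G, ∀ x ∈ Gv w, g * x * g⁻¹ ∈ Gv v
  -- … with branching `Σ_{v → v'} [G_v : G_{v'}] > 1` at interior non-root vertices …
  h1_branch : ∀ v, v ≠ root → ¬ toMetricRootedTree.IsLeaf v →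
    1 < ∑ w ∈ toMetricRootedTree.children v, Nat.card (Gv v) / Nat.card (Gv w)
  -- … and monodromy group `G` at the root and at the target of the trunk.
  h1_root : Gv root = ⊤
  h1_trunk : Gv trunk = ⊤
  -- (H2): the monodromy group at each leaf is nontrivial and cyclic.
  h2 : ∀ b, toMetricRootedTree.IsLeaf b → Gv b ≠ ⊥ ∧ IsCyclic (Gv b)
  -- (H3): the Artin characters.
  h3_leaf : ∀ b, toMetricRootedTree.IsLeaf b → av b = indAug (Gv b)
  h3_inner : ∀ v, v ≠ root → ¬ toMetricRootedTree.IsLeaf v →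
    av v = fun g => ∑ w ∈ toMetricRootedTree.children v, av w g
  -- (H4): the depth characters, `δ_{t(e)} = δ_{s(e)} + ε_e·(a_e - (u_{G_{t(e)}})^*)`.
  h4 : ∀ v, v ≠ root →
    dv v = fun g => dv (parent v) g + (eps v : ℂ) * (av v g - indAug (Gv v) g)
  -- (H5): at each leaf, `δ_b` is induced from `δ^mult` of the Sylow `p`-subgroup of `G_b`.
  h5 : ∀ b, toMetricRootedTree.IsLeaf b → ∀ P : Subgroup G, P ≤ Gv b → IsPGroup p P →
    (∀ Q : Subgroup G, Q ≤ Gv b → IsPGroup p Q → Q ≤ P) →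
    dv b = indCF P (deltaMultSub p P)

namespace HurwitzTree

variable {G : Type} [Group G] [Fintype G] {p : ℕ} (T : HurwitzTree G p)

/-- The depth `δ_T` of a Hurwitz tree. -/
noncomputable def depth : G → ℂ := T.dv T.root

/-- The Artin character `a_T` of a Hurwitz tree (the Artin character of the trunk). -/
noncomputable def artin : G → ℂ := T.av T.trunk

end HurwitzTree

/-!
Telescoping (H4) along the path from the root to `b` gives
`δ_b(χ) - δ_{v₀}(χ) = Σ_e ε_e (⟨χ, a_e⟩ - ⟨χ, (u_{G_{t(e)}})^*⟩)`.
Unfolding (H3), `a_e` is the sum of the `(u_{G_a})^*` over the leaves `a` above `e`, so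
`⟨χ, a_e⟩ = m · |{a ∈ A | e ≤ a}|`. By Frobenius reciprocity
`⟨χ_V, (u_H)^*⟩ = χ_V(1) - dim V^H`, and since `G_b ⊆ G_{t(e)} ⊆ G` up to conjugacy, the
hypothesis at `b` forces `⟨χ, (u_{G_{t(e)}})^*⟩ = m`. So the edge `e` contributes
`m · ε_e · n(A, b, e)`, and these contributions add up to `m · d(A, b)`.
-/

namespace MetricRootedTree

variable (T : MetricRootedTree)

open Classical in
/-- The targets of the edges on the path from the root to `v`. -/
noncomputable def path (v : T.V) : Finset T.V :=
  univ.filter (fun w => T.le w v ∧ w ≠ T.root)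

variable {T}

theorem le_refl (v : T.V) : T.le v v := ⟨0, rfl⟩

theorem le_trans {u v w : T.V} (huv : T.le u v) (hvw : T.le v w) : T.le u w := by
  obtain ⟨n, hn⟩ := huv
  obtain ⟨k, hk⟩ := hvw
  exact ⟨n + k, by rw [Function.iterate_add_apply, hk, hn]⟩

theorem le_of_parent_eq {v w : T.V} (h : T.parent w = v) : T.le v w := ⟨1, h⟩

theorem le_of_le_parent {u v : T.V} (h : T.le u (T.parent v)) : T.le u v :=
  le_trans h (le_of_parent_eq rfl)

theorem le_parent_of_le_of_ne {u v : T.V} (h : T.le u v) (hne : u ≠ v) :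
    T.le u (T.parent v) := by
  obtain ⟨_ | n, hn⟩ := h
  · exact absurd hn.symm hne
  · exact ⟨n, hn⟩

theorem iterate_parent_root (n : ℕ) : T.parent^[n] T.root = T.root :=
  Function.iterate_fixed T.parent_root n

theorem eq_root_of_le_root {v : T.V} (h : T.le v T.root) : v = T.root := by
  obtain ⟨n, hn⟩ := h
  rw [← hn, iterate_parent_root]

theorem eq_root_of_isPeriodicPt {v : T.V} {k : ℕ} (hk : 0 < k)
    (h : Function.IsPeriodicPt T.parent k v) : v = T.root := by
  obtain ⟨N, hN⟩ := T.reaches_root v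
  have hkN : T.parent^[(k * N - N) + N] v = T.root := by
    rw [Function.iterate_add_apply, hN, iterate_parent_root]
  rwa [Nat.sub_add_cancel (Nat.le_mul_of_pos_left N hk), (h.mul_const N).eq] at hkN

theorem le_antisymm {v w : T.V} (hvw : T.le v w) (hwv : T.le w v) : v = w := by
  obtain ⟨n, hn⟩ := hvw
  obtain ⟨k, hk⟩ := hwv
  rcases Nat.eq_zero_or_pos (n + k) with h | h
  · rw [← hn, Nat.eq_zero_of_add_eq_zero_right h, Function.iterate_zero_apply]
  · have hv : v = T.root := eq_root_of_isPeriodicPt h (by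
      rw [Function.IsPeriodicPt, Function.IsFixedPt, Function.iterate_add_apply, hk, hn])
    subst hv
    exact (eq_root_of_le_root ⟨k, hk⟩).symm

theorem parent_ne_self {v : T.V} (hv : v ≠ T.root) : T.parent v ≠ v :=
  fun h => hv <| eq_root_of_isPeriodicPt one_pos <| by
    rwa [Function.IsPeriodicPt, Function.iterate_one]

theorem le_total_of_le {u w a : T.V} (hu : T.le u a) (hw : T.le w a) :
    T.le u w ∨ T.le w u := by
  obtain ⟨n, rfl⟩ := hu
  obtain ⟨k, rfl⟩ := hw
  rcases le_total n k with h | h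
  · exact Or.inr ⟨k - n, by rw [← Function.iterate_add_apply, Nat.sub_add_cancel h]⟩
  · exact Or.inl ⟨n - k, by rw [← Function.iterate_add_apply, Nat.sub_add_cancel h]⟩

theorem mem_children {v w : T.V} : w ∈ T.children v ↔ T.parent w = v ∧ w ≠ v := by
  simp [children]

theorem exists_mem_children_le {v a : T.V} (h : T.le v a) (hne : a ≠ v) :
    ∃ w ∈ T.children v, T.le w a := by
  obtain ⟨n, hn⟩ := h
  induction n generalizing a with
  | zero => exact absurd hn hne
  | succ n ih =>
    by_cases ha : T.parent a = v
    · exact ⟨a, mem_children.2 ⟨ha, hne⟩, le_refl a⟩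
    · obtain ⟨w, hw, hwa⟩ := ih ha hn
      exact ⟨w, hw, le_of_le_parent hwa⟩

theorem IsLeaf.eq_of_le {v a : T.V} (hv : T.IsLeaf v) (h : T.le v a) : a = v := by
  by_contra hne
  obtain ⟨w, hw, -⟩ := exists_mem_children_le h hne
  exact (mem_children.1 hw).2 (hv.2 w (mem_children.1 hw).1)

open Classical in
theorem card_filter_le_lt_of_mem_children {v w : T.V} (hw : w ∈ T.children v) :
    (univ.filter (T.le w ·)).card < (univ.filter (T.le v ·)).card := by
  obtain ⟨hwv, hne⟩ := mem_children.1 hw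
  refine card_lt_card ⟨fun x hx => ?_, fun hsub => hne ?_⟩
  · simp only [mem_filter, mem_univ, true_and] at hx ⊢
    exact le_trans (le_of_parent_eq hwv) hx
  · have hvw : T.le w v := by simpa using hsub (by simpa using le_refl v)
    exact le_antisymm hvw (le_of_parent_eq hwv)

open Classical in
theorem sum_filter_le_eq_sum_children {M : Type*} [AddCommMonoid M] (f : T.V → M)
    {s : Finset T.V} {v : T.V} (hv : v ∉ s) :
    ∑ a ∈ s.filter (T.le v ·), f a =
      ∑ w ∈ T.children v, ∑ a ∈ s.filter (T.le w ·), f a := by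
  rw [← sum_biUnion]
  · refine sum_congr (ext fun a => ?_) fun _ _ => rfl
    simp only [mem_filter, mem_biUnion]
    constructor
    · rintro ⟨ha, hva⟩
      obtain ⟨w, hw, hwa⟩ := exists_mem_children_le hva (ne_of_mem_of_not_mem ha hv)
      exact ⟨w, hw, ha, hwa⟩
    · rintro ⟨w, hw, ha, hwa⟩
      exact ⟨ha, le_trans (le_of_parent_eq (mem_children.1 hw).1) hwa⟩
  · intro w₁ hw₁ w₂ hw₂ hne
    obtain ⟨hp₁, hne₁⟩ := mem_children.1 hw₁
    obtain ⟨hp₂, hne₂⟩ := mem_children.1 hw₂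
    refine disjoint_left.2 fun a ha₁ ha₂ => ?_
    rcases le_total_of_le (mem_filter.1 ha₁).2 (mem_filter.1 ha₂).2 with h | h
    · have := le_parent_of_le_of_ne h hne
      rw [hp₂] at this
      exact hne₁ (le_antisymm this (le_of_parent_eq hp₁))
    · have := le_parent_of_le_of_ne h hne.symm
      rw [hp₁] at this
      exact hne₂ (le_antisymm this (le_of_parent_eq hp₂))

theorem ne_root_of_mem_children {v w : T.V} (hw : w ∈ T.children v) : w ≠ T.root := by
  rintro rfl
  obtain ⟨hv, hne⟩ := mem_children.1 hw
  exact hne (hv ▸ T.parent_root).symm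

open Classical in
theorem card_filter_le_eq_nCount_add_one {A : Finset T.V} {b w : T.V} (hb : b ∈ A)
    (hwb : T.le w b) : (A.filter (T.le w ·)).card = T.nCount A b w + 1 := by
  rw [nCount, filter_erase, card_erase_add_one (mem_filter.2 ⟨hb, hwb⟩)]

theorem mem_path {v w : T.V} : w ∈ T.path v ↔ T.le w v ∧ w ≠ T.root := by
  simp [path]

theorem path_root : T.path T.root = ∅ :=
  eq_empty_of_forall_notMem fun _ hw =>
    (mem_path.1 hw).2 (eq_root_of_le_root (mem_path.1 hw).1)

theorem path_eq_insert_parent {v : T.V} (hv : v ≠ T.root) :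
    T.path v = insert v (T.path (T.parent v)) := by
  ext w
  simp only [mem_insert, mem_path]
  constructor
  · rintro ⟨hwv, hw⟩
    by_cases h : w = v
    · exact Or.inl h
    · exact Or.inr ⟨le_parent_of_le_of_ne hwv h, hw⟩
  · rintro (rfl | ⟨hwv, hw⟩)
    · exact ⟨le_refl w, hv⟩
    · exact ⟨le_of_le_parent hwv, hw⟩

theorem notMem_path_parent {v : T.V} (hv : v ≠ T.root) : v ∉ T.path (T.parent v) :=
  fun h => parent_ne_self hv (le_antisymm (le_of_parent_eq rfl) (mem_path.1 h).1)

open Classical in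
theorem idist_eq_sum_path_filter (b b' : T.V) :
    T.idist b b' = ∑ v ∈ (T.path b).filter (T.le · b'), T.eps v := by
  simp only [idist, path, filter_filter]
  congr 1
  ext v
  simp only [mem_filter, mem_univ, true_and]
  tauto

theorem density_eq_sum_path (A : Finset T.V) (b : T.V) :
    T.density A b = ∑ v ∈ T.path b, T.eps v * T.nCount A b v := by
  classical
  simp only [density, idist_eq_sum_path_filter, nCount, sum_filter]
  rw [sum_comm]
  refine sum_congr rfl fun v _ => ?_
  rw [← sum_filter, sum_const, nsmul_eq_mul, mul_comm]

end MetricRootedTree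

section Characters

open Module

section Linear

variable {G : Type} [Fintype G]

noncomputable def innerCFₗ (χ : G → ℂ) : (G → ℂ) →ₗ[ℂ] ℂ where
  toFun := innerCF χ
  map_add' f g := by simp only [innerCF, Pi.add_apply, mul_add, sum_add_distrib]
  map_smul' c f := by
    simp only [innerCF, Pi.smul_apply, smul_eq_mul, RingHom.id_apply, mul_sum]
    exact sum_congr rfl fun _ _ => by ring

theorem innerCF_add (χ f g : G → ℂ) : innerCF χ (f + g) = innerCF χ f + innerCF χ g :=
  map_add (innerCFₗ χ) f g

theorem innerCF_sub (χ f g : G → ℂ) : innerCF χ (f - g) = innerCF χ f - innerCF χ g :=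
  map_sub (innerCFₗ χ) f g

theorem innerCF_smul (χ f : G → ℂ) (c : ℂ) : innerCF χ (c • f) = c * innerCF χ f :=
  map_smul (innerCFₗ χ) c f

theorem innerCF_sum {ι : Type*} (χ : G → ℂ) (s : Finset ι) (f : ι → G → ℂ) :
    innerCF χ (∑ i ∈ s, f i) = ∑ i ∈ s, innerCF χ (f i) :=
  map_sum (innerCFₗ χ) f s

end Linear

variable {G : Type} [Group G]

noncomputable def finrankInvariants (V : FDRep ℂ G) (H : Subgroup G) : ℕ :=
  finrank ℂ (Representation.invariants (V.ρ.comp H.subtype))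

/-- Conjugation by `ρ(g)⁻¹` embeds the `K`-invariants into the `H`-invariants. -/
theorem finrankInvariants_le_of_conj_le (V : FDRep ℂ G) {H K : Subgroup G} (g : G)
    (hg : ∀ x ∈ H, g * x * g⁻¹ ∈ K) : finrankInvariants V K ≤ finrankInvariants V H := by
  let e : V ≃ₗ[ℂ] V :=
    LinearEquiv.ofBijective (V.ρ g⁻¹) (Representation.apply_bijective V.ρ g⁻¹)
  have hmap : (Representation.invariants (V.ρ.comp K.subtype)).map (e : V →ₗ[ℂ] V)
      ≤ Representation.invariants (V.ρ.comp H.subtype) := by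
    rintro _ ⟨v, hv, rfl⟩
    rw [SetLike.mem_coe, Representation.mem_invariants] at hv
    rw [Representation.mem_invariants]
    intro x
    have hx : V.ρ x (V.ρ g⁻¹ v) = V.ρ g⁻¹ (V.ρ (g * x * g⁻¹) v) := by
      rw [← Module.End.mul_apply, ← map_mul, ← Module.End.mul_apply, ← map_mul]
      group
    change V.ρ x (V.ρ g⁻¹ v) = V.ρ g⁻¹ v
    rw [hx]
    exact congrArg (V.ρ g⁻¹) (hv ⟨_, hg x x.2⟩)
  calc finrankInvariants V K
      = finrank ℂ ((Representation.invariants (V.ρ.comp K.subtype)).map (e : V →ₗ[ℂ] V)) :=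
        (LinearEquiv.finrank_map_eq e _).symm
    _ ≤ finrankInvariants V H := Submodule.finrank_mono hmap

variable [Fintype G]

/-- Frobenius reciprocity for the induction `indCF`. -/
theorem innerCF_indCF {χ : G → ℂ} (hχ : ∀ x g : G, χ (x * g * x⁻¹) = χ g)
    (H : Subgroup G) (f : G → ℂ) :
    innerCF χ (indCF H f) = (Nat.card H : ℂ)⁻¹ * ∑ g : G, starRingEnd ℂ (χ g) * f g := by
  have hconj : ∀ x : G, ∑ g : G, starRingEnd ℂ (χ g) * f (x⁻¹ * g * x)
      = ∑ g : G, starRingEnd ℂ (χ g) * f g := fun x =>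
    Fintype.sum_equiv (MulAut.conj x⁻¹).toEquiv _ _ fun g => by
      simp only [MulAut.conj_apply, MulEquiv.toEquiv_eq_coe, MulEquiv.coe_toEquiv]
      rw [hχ, inv_inv]
  have hG : (Fintype.card G : ℂ) ≠ 0 := Nat.cast_ne_zero.2 Fintype.card_ne_zero
  calc innerCF χ (indCF H f)
      = (Fintype.card G : ℂ)⁻¹ * (Nat.card H : ℂ)⁻¹ *
          ∑ x : G, ∑ g : G, starRingEnd ℂ (χ g) * f (x⁻¹ * g * x) := by
        simp only [innerCF, indCF, mul_sum, mul_assoc]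
        rw [sum_comm]
        exact sum_congr rfl fun _ _ => sum_congr rfl fun _ _ => by ring
    _ = (Nat.card H : ℂ)⁻¹ * ∑ g : G, starRingEnd ℂ (χ g) * f g := by
        rw [sum_congr rfl fun x _ => hconj x, sum_const, card_univ, nsmul_eq_mul]
        field_simp

theorem indAug_top : indAug (⊤ : Subgroup G) = augChar ⊤ := by
  classical
  have hG : (Fintype.card G : ℂ) ≠ 0 := Nat.cast_ne_zero.2 Fintype.card_ne_zero
  have hconj : ∀ g x : G, augChar (⊤ : Subgroup G) (x⁻¹ * g * x) = augChar ⊤ g := by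
    intro g x
    have hone : x⁻¹ * g * x = 1 ↔ g = 1 := by
      simpa using conj_eq_one_iff (a := x⁻¹) (b := g)
    simp [augChar, hone]
  funext g
  rw [indAug, indCF, Subgroup.card_top, Nat.card_eq_fintype_card]
  simp only [hconj, sum_const, card_univ, nsmul_eq_mul]
  field_simp

theorem sum_character_subgroup (V : FDRep ℂ G) (H : Subgroup G) [DecidablePred (· ∈ H)] :
    ∑ h : H, V.character h = Nat.card H * finrankInvariants V H := by
  have hH : (Fintype.card H : ℂ) ≠ 0 := Nat.cast_ne_zero.2 Fintype.card_ne_zero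
  have hav : (Nat.card H : ℂ)⁻¹ * ∑ h : H, V.character h = finrankInvariants V H :=
    FDRep.average_char_eq_finrank_invariants (FDRep.of (V.ρ.comp H.subtype))
  rw [← hav, Nat.card_eq_fintype_card, ← mul_assoc, mul_inv_cancel₀ hH, one_mul]

theorem innerCF_indAug (V : FDRep ℂ G) (H : Subgroup G) :
    innerCF V.character (indAug H) =
      starRingEnd ℂ (V.character 1) - finrankInvariants V H := by
  classical
  have hH : (Nat.card H : ℂ) ≠ 0 := Nat.cast_ne_zero.2 Nat.card_pos.ne'
  have hsplit : ∀ g : G, starRingEnd ℂ (V.character g) * augChar H g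
      = (if g = 1 then starRingEnd ℂ (V.character 1) * Nat.card H else 0)
        - starRingEnd ℂ (if g ∈ H then V.character g else 0) := by
    intro g
    by_cases h1 : g = 1
    · subst h1
      simp only [FDRep.char_one, map_natCast, augChar, one_mem, ↓reduceIte,
        Nat.card_eq_fintype_card]
      ring
    · by_cases hg : g ∈ H <;> simp [augChar, h1, hg]
  have hsubgroup : ∑ g : G, (if g ∈ H then V.character g else 0)
      = Nat.card H * finrankInvariants V H := by
    rw [← sum_character_subgroup, ← sum_filter]
    exact sum_subtype _ (by simp) V.character
  rw [indAug, innerCF_indCF (fun x g => FDRep.char_conj V g x),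
    sum_congr rfl fun g _ => hsplit g, sum_sub_distrib, sum_ite_eq', if_pos (mem_univ 1),
    ← map_sum, hsubgroup]
  simp only [map_mul, map_natCast]
  field_simp

/-- `⟨χ_V, u_H^*⟩ = χ_V(1) - dim V^H`, and `dim V^H` only decreases as `H` grows up to `G`. -/
theorem innerCF_indAug_eq_of_conj_le (V : FDRep ℂ G) {H K : Subgroup G} (g : G)
    (hg : ∀ x ∈ H, g * x * g⁻¹ ∈ K)
    (hH : innerCF V.character (indAug H) = innerCF V.character (augChar ⊤)) :
    innerCF V.character (indAug K) = innerCF V.character (augChar ⊤) := by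
  have hiff : ∀ L : Subgroup G, innerCF V.character (indAug L) =
      innerCF V.character (augChar ⊤) ↔ finrankInvariants V L = finrankInvariants V ⊤ := by
    intro L
    rw [← indAug_top, innerCF_indAug, innerCF_indAug, sub_right_inj, Nat.cast_inj]
  rw [hiff] at hH ⊢
  exact le_antisymm ((finrankInvariants_le_of_conj_le V g hg).trans_eq hH)
    (finrankInvariants_le_of_conj_le V 1 fun x _ => Subgroup.mem_top _)

end Characters

namespace HurwitzTree

open MetricRootedTree

variable {G : Type} [Group G] [Fintype G] {p : ℕ} (T : HurwitzTree G p)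

theorem exists_conj_le_of_le {v w : T.V} (h : T.le v w) :
    ∃ g : G, ∀ x ∈ T.Gv w, g * x * g⁻¹ ∈ T.Gv v := by
  obtain ⟨n, hn⟩ := h
  induction n generalizing w with
  | zero => exact ⟨1, fun x hx => by simpa [← hn] using hx⟩
  | succ n ih =>
    obtain ⟨g₁, hg₁⟩ := ih hn
    by_cases hw : w = T.parent w
    · exact ⟨g₁, fun x hx => hg₁ x (hw ▸ hx)⟩
    · obtain ⟨g₂, hg₂⟩ := T.h1_sub (T.parent w) w rfl hw
      refine ⟨g₁ * g₂, fun x hx => ?_⟩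
      convert hg₁ _ (hg₂ x hx) using 1
      group

open Classical in
theorem av_eq_sum_indAug {v : T.V} (hv : v ≠ T.root) :
    T.av v = ∑ a ∈ T.leaves.filter (T.le v ·), indAug (T.Gv a) := by
  induction hc : (univ.filter (T.le v ·)).card using Nat.strong_induction_on generalizing v with
  | _ n ih =>
  by_cases hleaf : T.IsLeaf v
  · have hsingleton : T.leaves.filter (T.le v ·) = {v} := by
      ext a
      simp only [mem_filter, mem_singleton, leaves, mem_univ, true_and]
      refine ⟨fun ha => hleaf.eq_of_le ha.2, ?_⟩
      rintro rfl
      exact ⟨hleaf, le_refl a⟩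
    rw [T.h3_leaf v hleaf, hsingleton, sum_singleton]
  · have hvB : v ∉ T.leaves := by simpa [leaves] using hleaf
    rw [T.h3_inner v hv hleaf, sum_filter_le_eq_sum_children _ hvB, ← sum_fn]
    exact sum_congr rfl fun w hw =>
      ih _ (hc ▸ card_filter_le_lt_of_mem_children hw) (ne_root_of_mem_children hw) rfl

open Classical in
theorem innerCF_av_eq_mul_card {χ : G → ℂ} {m : ℂ} {A : Finset T.V} (hA : A ⊆ T.leaves)
    (hin : ∀ a ∈ A, innerCF χ (indAug (T.Gv a)) = m)
    (hout : ∀ a ∈ T.leaves, a ∉ A → innerCF χ (indAug (T.Gv a)) = 0)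
    {v : T.V} (hv : v ≠ T.root) :
    innerCF χ (T.av v) = m * (A.filter (T.le v ·)).card := by
  have hzero : ∀ a ∈ T.leaves.filter (T.le v ·), a ∉ A.filter (T.le v ·) →
      innerCF χ (indAug (T.Gv a)) = 0 := by
    simp only [mem_filter, not_and]
    exact fun a ha haA => hout a ha.1 fun h => haA h ha.2
  rw [T.av_eq_sum_indAug hv, innerCF_sum, ← sum_subset (filter_subset_filter _ hA) hzero,
    sum_congr rfl fun a ha => hin a (mem_filter.1 ha).1, sum_const, nsmul_eq_mul, mul_comm]

theorem dv_eq_add_sum_path (v : T.V) :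
    T.dv v = T.dv T.root + ∑ w ∈ T.path v, (T.eps w : ℂ) • (T.av w - indAug (T.Gv w)) := by
  obtain ⟨n, hn⟩ := T.reaches_root v
  induction n generalizing v with
  | zero =>
    rw [Function.iterate_zero_apply] at hn
    rw [hn, path_root, sum_empty, add_zero]
  | succ n ih =>
    by_cases hv : v = T.root
    · rw [hv, path_root, sum_empty, add_zero]
    · rw [path_eq_insert_parent hv, sum_insert (notMem_path_parent hv), add_left_comm,
        ← ih (T.parent v) hn, T.h4 v hv]
      exact add_comm _ _

theorem innerCF_dv_sub_innerCF_dv_root (χ : G → ℂ) (v : T.V) :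
    innerCF χ (T.dv v) - innerCF χ (T.dv T.root) =
      ∑ w ∈ T.path v,
        (T.eps w : ℂ) * (innerCF χ (T.av w) - innerCF χ (indAug (T.Gv w))) := by
  rw [T.dv_eq_add_sum_path v, innerCF_add, innerCF_sum, add_sub_cancel_left]
  simp only [innerCF_smul, innerCF_sub]

end HurwitzTree

open Classical in
theorem stmt12_general (G : Type) [Group G] [Fintype G] (p : ℕ)
    (T : HurwitzTree G p) (A : Finset T.V) (hA : A ⊆ T.toMetricRootedTree.leaves)
    (b : T.V) (hb : b ∈ A)
    (χ : G → ℂ) (hχ : ∃ V : FDRep ℂ G, ∀ g : G, χ g = V.character g)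
    (m : ℂ) (hm : innerCF χ (augChar (⊤ : Subgroup G)) = m)
    (hA' : ∀ a ∈ A, innerCF χ (indAug (T.Gv a)) = m)
    (hB' : ∀ a ∈ T.toMetricRootedTree.leaves, a ∉ A → innerCF χ (indAug (T.Gv a)) = 0) :
    m * (T.toMetricRootedTree.density A b : ℂ) =
      innerCF χ (T.dv b) - innerCF χ (T.dv T.root) := by
  obtain ⟨V, hχV⟩ := hχ
  obtain rfl : χ = V.character := funext hχV
  rw [T.innerCF_dv_sub_innerCF_dv_root, MetricRootedTree.density_eq_sum_path, Rat.cast_sum,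
    mul_sum]
  refine sum_congr rfl fun w hw => ?_
  obtain ⟨hwb, hw⟩ := MetricRootedTree.mem_path.1 hw
  obtain ⟨g, hg⟩ := T.exists_conj_le_of_le hwb
  rw [T.innerCF_av_eq_mul_card hA hA' hB' hw,
    innerCF_indAug_eq_of_conj_le V g hg ((hA' b hb).trans hm.symm), hm,
    MetricRootedTree.card_filter_le_eq_nCount_add_one hb hwb]
  push_cast
  ring

open Classical in
/-- Density lemma for Hurwitz trees: let `T` be a Hurwitz tree of type `(G,p)`, `A ⊆ B`
a set of leaves, `b ∈ A`, and `χ` a character of `G` with `⟨χ, (u_{G_a})^*⟩ = m` for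
`a ∈ A` and `= 0` for `a ∈ B∖A`, where `m = ⟨χ, u_G⟩`.  Then
`m·d(A,b) = δ_b(χ) - δ_{v₀}(χ)`. -/
theorem stmt12 (G : Type) [Group G] [Fintype G] (p : ℕ) (hp : p.Prime)
    (T : HurwitzTree G p) (A : Finset T.V) (hA : A ⊆ T.toMetricRootedTree.leaves)
    (b : T.V) (hb : b ∈ A)
    (χ : G → ℂ) (hχ : ∃ V : FDRep ℂ G, ∀ g : G, χ g = V.character g)
    (m : ℂ) (hm : innerCF χ (augChar (⊤ : Subgroup G)) = m)
    (hA' : ∀ a ∈ A, innerCF χ (indAug (T.Gv a)) = m)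
    (hB' : ∀ a ∈ T.toMetricRootedTree.leaves, a ∉ A → innerCF χ (indAug (T.Gv a)) = 0) :
    m * (T.toMetricRootedTree.density A b : ℂ) =
      innerCF χ (T.dv b) - innerCF χ (T.dv T.root) :=
  stmt12_general G p T A hA b hb χ hχ m hm hA' hB'
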